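/- arXiv:2106.10742 — 2 statements merged into one kernel-verified Lean document; each statement's English description precedes it below -/
import Mathlib

section
/- Let M and N be chain complexes of R-modules. If N lies in the subprojectivity domain of M[-1] and also in the subprojectivity domain of M (in the category of complexes), then for every integer n the module N_n lies in the subprojectivity domain of the module M_n. -/
open CategoryTheory CategoryTheory.Limits

universe u

/-- `N` belongs to the subprojectivity domain of `M`: every morphism `M ⟶ N` factors
through a projective object. -/
def SubprojDomain {A : Type*} [Category A] (M N : A) : Prop :=
  ∀ f : M ⟶ N, ∃ (P : A) (_ : Projective P) (a : M ⟶ P) (b : P ⟶ N), a ≫ b = f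

/-- The shift `M[-1]` of a chain complex: `M[-1]ᵢ = M_{i+1}` with differential `-d`. -/
def shiftNegOne {R : Type u} [Ring R] (M : ChainComplex (ModuleCat.{u} R) ℤ) :
    ChainComplex (ModuleCat.{u} R) ℤ where
  X i := M.X (i + 1)
  d i j := -(M.d (i + 1) (j + 1))
  shape i j h := by
    have : ¬ (ComplexShape.down ℤ).Rel (i + 1) (j + 1) := by
      simp only [ComplexShape.down_Rel] at h ⊢; omega
    rw [M.shape _ _ this, neg_zero]
  d_comp_d' i j k _ _ := by simp

/-!
Let `f : M_n ⟶ N_n` and let `φ` be the degree-zero graded map `M ⟶ N` equal to `f` in degree `n`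
and zero elsewhere. Its boundary `∂φ = dφ - φd` in the Hom complex is a chain map `M[-1] ⟶ N`,
hence factors through a projective complex `P`. A projective complex is contractible (it is a
retract of a direct sum of discs) and has projective components, so `∂φ = ∂K` for a graded map
`K` whose components factor through projective modules. Then `φ - K` is a chain map `M ⟶ N`,
which factors through a projective complex `Q`, and `f = (φ - K)_n + K_n` factors through
`Q_n ⊞ P_n`.
-/

section FactorsThroughProjective

variable {C : Type*} [Category C]

def FactorsThroughProjective {X Y : C} (f : X ⟶ Y) : Prop :=
  ∃ (P : C) (_ : Projective P) (a : X ⟶ P) (b : P ⟶ Y), a ≫ b = f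

lemma factorsThroughProjective_comp {X P Y : C} [Projective P] (a : X ⟶ P) (b : P ⟶ Y) :
    FactorsThroughProjective (a ≫ b) :=
  ⟨P, inferInstance, a, b, rfl⟩

lemma FactorsThroughProjective.comp_left {W X Y : C} (g : W ⟶ X) {f : X ⟶ Y}
    (hf : FactorsThroughProjective f) : FactorsThroughProjective (g ≫ f) := by
  obtain ⟨P, _, a, b, rfl⟩ := hf
  exact ⟨P, inferInstance, g ≫ a, b, Category.assoc _ _ _⟩

lemma FactorsThroughProjective.add [Preadditive C] [HasBinaryBiproducts C] {X Y : C}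
    {f g : X ⟶ Y} (hf : FactorsThroughProjective f) (hg : FactorsThroughProjective g) :
    FactorsThroughProjective (f + g) := by
  obtain ⟨P, _, a, b, rfl⟩ := hf
  obtain ⟨Q, _, c, d, rfl⟩ := hg
  exact ⟨P ⊞ Q, inferInstance, biprod.lift a c, biprod.desc b d, biprod.lift_desc ..⟩

end FactorsThroughProjective

namespace ChainComplex

section ProjectiveX

variable {C : Type*} [Category C] [HasZeroMorphisms C]

noncomputable def stepComplex (m : ℤ) (A : C) : ChainComplex C ℤ where
  X _ := A
  d i j := if i = m + 1 ∧ j = m then 𝟙 A else 0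
  shape i j hij := if_neg fun h => hij (by simp only [ComplexShape.down_Rel]; omega)
  d_comp_d' i j k _ _ := by
    split_ifs with h₁ h₂ <;> first | omega | simp

noncomputable def stepComplexMap (m : ℤ) {A B : C} (e : A ⟶ B) :
    stepComplex m A ⟶ stepComplex m B where
  f _ := e
  comm' i j _ := by dsimp [stepComplex]; split_ifs <;> simp

noncomputable def toStepComplex (K : ChainComplex C ℤ) (m : ℤ) {A : C} (g : K.X m ⟶ A) :
    K ⟶ stepComplex m A where
  f i := if h : i = m then (K.XIsoOfEq h).hom ≫ g else K.d i m ≫ g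
  comm' i j hij := by
    simp only [ComplexShape.down_Rel] at hij
    subst hij
    dsimp only [stepComplex]
    by_cases hj : j = m
    · subst hj
      simp
    · rw [dif_neg hj, if_neg (by omega), comp_zero, K.d_comp_d_assoc, zero_comp]

lemma toStepComplex_f_self (K : ChainComplex C ℤ) (m : ℤ) {A : C} (g : K.X m ⟶ A) :
    (toStepComplex K m g).f m = g := by
  dsimp only [toStepComplex]
  rw [dif_pos rfl]
  exact Category.id_comp g

instance projective_X (P : ChainComplex C ℤ) [Projective P] (m : ℤ) : Projective (P.X m) where
  factors g e he := by
    have : Epi (stepComplexMap m e) := HomologicalComplex.epi_of_epi_f _ fun _ => he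
    refine ⟨(Projective.factorThru (toStepComplex P m g) (stepComplexMap m e)).f m, ?_⟩
    exact (congrArg (fun φ : P ⟶ stepComplex m _ => φ.f m)
      (Projective.factorThru_comp _ _)).trans (toStepComplex_f_self P m g)

end ProjectiveX

section Contractible

variable {C : Type*} [Category C] [Preadditive C] [HasBinaryBiproducts C] (P : ChainComplex C ℤ)

/-- The direct sum of the discs on the `P.X j`; it is contractible and maps onto `P`. -/
noncomputable def discCover : ChainComplex C ℤ where
  X j := P.X j ⊞ P.X (j + 1)
  d i j := if h : j + 1 = i then biprod.fst ≫ (P.XIsoOfEq h.symm).hom ≫ biprod.inr else 0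
  shape i j hij := dif_neg (by simpa using hij)
  d_comp_d' i j k hij hjk := by
    simp only [ComplexShape.down_Rel] at hij hjk
    rw [dif_pos hij, dif_pos hjk]
    simp

noncomputable def discCover.π : discCover P ⟶ P where
  f j := biprod.desc (𝟙 _) (P.d (j + 1) j)
  comm' i j hij := by
    simp only [ComplexShape.down_Rel] at hij
    subst hij
    apply biprod.hom_ext' <;> simp [discCover]

instance : Epi (discCover.π P) :=
  HomologicalComplex.epi_of_epi_f _ fun j => epi_of_epi_fac (biprod.inl_desc (𝟙 (P.X j)) _)

noncomputable def discCover.contraction : Homotopy (𝟙 (discCover P)) 0 where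
  hom i j := if h : i + 1 = j then biprod.snd ≫ (P.XIsoOfEq h).hom ≫ biprod.inl else 0
  zero i j hij := dif_neg (by simpa using hij)
  comm i := by
    rw [dNext_eq _ (show (ComplexShape.down ℤ).Rel i (i - 1) by simp),
      prevD_eq _ (show (ComplexShape.down ℤ).Rel (i + 1) i by simp),
      HomologicalComplex.zero_f_apply, add_zero, HomologicalComplex.id_f]
    simp only [discCover, sub_add_cancel, ↓reduceDIte, Category.assoc, BinaryBicone.inr_snd_assoc,
      HomologicalComplex.XIsoOfEq_hom_comp_XIsoOfEq_hom_assoc, HomologicalComplex.XIsoOfEq_rfl,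
      Iso.refl_hom, Category.id_comp, BinaryBicone.inl_fst_assoc]
    exact biprod.total.symm

noncomputable def homotopyIdZeroOfProjective [Projective P] : Homotopy (𝟙 P) 0 :=
  let σ := Projective.factorThru (𝟙 P) (discCover.π P)
  (Homotopy.ofEq (by simp [σ])).trans
    ((((discCover.contraction P).compLeft σ).compRight (discCover.π P)).trans
      (Homotopy.ofEq (by simp)))

end Contractible

end ChainComplex

section ComplexesOverPreadditive

variable {C : Type*} [Category C] [Preadditive C] {X Y : ChainComplex C ℤ}

lemma FactorsThroughProjective.f {g : X ⟶ Y} (hg : FactorsThroughProjective g) (n : ℤ) :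
    FactorsThroughProjective (g.f n) := by
  obtain ⟨P, _, a, b, rfl⟩ := hg
  exact factorsThroughProjective_comp (a.f n) (b.f n)

variable [HasBinaryBiproducts C] in
lemma exists_homotopy_zero_of_factorsThroughProjective {g : X ⟶ Y}
    (hg : FactorsThroughProjective g) :
    ∃ h : Homotopy g 0, ∀ i j, FactorsThroughProjective (h.hom i j) := by
  obtain ⟨P, _, a, b, rfl⟩ := hg
  rw [show a ≫ b = (a ≫ 𝟙 P) ≫ b by simp, show (0 : X ⟶ Y) = (a ≫ 0) ≫ b by simp]
  exact ⟨((ChainComplex.homotopyIdZeroOfProjective P).compLeft a).compRight b,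
    fun i j => factorsThroughProjective_comp (a.f i ≫ _) (b.f j)⟩

end ComplexesOverPreadditive

section ModuleCat

variable {R : Type u} [Ring R] {M N : ChainComplex (ModuleCat.{u} R) ℤ}

/-- The Hom-complex differential of a degree-zero graded map; it is a chain map thanks to the sign
of the differential of `shiftNegOne`. -/
noncomputable def gradedBoundary (φ : ∀ i, M.X i ⟶ N.X i) : shiftNegOne M ⟶ N where
  f i := φ (i + 1) ≫ N.d (i + 1) i - M.d (i + 1) i ≫ φ i
  comm' i j hij := by
    simp only [ComplexShape.down_Rel] at hij
    subst hij
    simp [shiftNegOne]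

lemma gradedBoundary_sub (φ ψ : ∀ i, M.X i ⟶ N.X i) :
    gradedBoundary (φ - ψ) = gradedBoundary φ - gradedBoundary ψ := by
  ext i : 1
  simp only [gradedBoundary, Pi.sub_apply, Preadditive.sub_comp, Preadditive.comp_sub,
    HomologicalComplex.sub_f_apply]
  abel

noncomputable def homOfGradedBoundaryEqZero (φ : ∀ i, M.X i ⟶ N.X i)
    (hφ : gradedBoundary φ = 0) : M ⟶ N where
  f := φ
  comm' i j hij := by
    simp only [ComplexShape.down_Rel] at hij
    subst hij
    exact sub_eq_zero.mp (congrArg (fun g : shiftNegOne M ⟶ N => g.f j) hφ)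

noncomputable def Homotopy.gradedPrimitive {g : shiftNegOne M ⟶ N} (h : Homotopy g 0) (i : ℤ) :
    M.X i ⟶ N.X i :=
  (M.XIsoOfEq (show i = i - 1 + 1 by omega)).hom ≫ h.hom (i - 1) i

lemma Homotopy.gradedPrimitive_eq {g : shiftNegOne M ⟶ N} (h : Homotopy g 0) {i j : ℤ}
    (hji : j + 1 = i) : h.gradedPrimitive i = (M.XIsoOfEq hji.symm).hom ≫ h.hom j i := by
  subst hji
  have reindex : ∀ a (ha : a = j),
      (M.XIsoOfEq (show j + 1 = a + 1 by omega)).hom ≫ h.hom a (j + 1)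
        = (M.XIsoOfEq rfl).hom ≫ h.hom j (j + 1) := by
    rintro a rfl; rfl
  exact reindex _ (by omega)

lemma Homotopy.gradedBoundary_gradedPrimitive {g : shiftNegOne M ⟶ N} (h : Homotopy g 0) :
    gradedBoundary h.gradedPrimitive = g := by
  ext k : 1
  have hg := h.comm k
  rw [dNext_eq _ (show (ComplexShape.down ℤ).Rel k (k - 1) by simp),
    prevD_eq _ (show (ComplexShape.down ℤ).Rel (k + 1) k by simp),
    HomologicalComplex.zero_f_apply, add_zero] at hg
  rw [hg, gradedBoundary]
  dsimp only
  rw [h.gradedPrimitive_eq (rfl : k + 1 = k + 1), h.gradedPrimitive_eq (show k - 1 + 1 = k by omega)]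
  simp only [shiftNegOne, HomologicalComplex.XIsoOfEq_rfl, Iso.refl_hom, Category.id_comp,
    HomologicalComplex.d_comp_XIsoOfEq_hom_assoc, Preadditive.neg_comp]
  abel

end ModuleCat

/-- if `N` is in the subprojectivity domain of `M[-1]` and of `M` (as
complexes), then `N_n` is in the subprojectivity domain of `M_n` for every `n`. -/
theorem componentwise_subprojDomain_of_shift
    {R : Type u} [Ring R] (M N : ChainComplex (ModuleCat.{u} R) ℤ)
    (h1 : SubprojDomain (shiftNegOne M) N) (h2 : SubprojDomain M N) :
    ∀ n : ℤ, SubprojDomain (M.X n) (N.X n) := by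
  intro n f
  let φ : ∀ i, M.X i ⟶ N.X i := Pi.single n f
  obtain ⟨h, hh⟩ := exists_homotopy_zero_of_factorsThroughProjective (h1 (gradedBoundary φ))
  let H : M ⟶ N := homOfGradedBoundaryEqZero (φ - h.gradedPrimitive) <| by
    rw [gradedBoundary_sub, h.gradedBoundary_gradedPrimitive, sub_self]
  have hf : f = H.f n + h.gradedPrimitive n := by
    simp [H, homOfGradedBoundaryEqZero, φ]
  rw [hf]
  exact (FactorsThroughProjective.f (h2 H) n).add ((hh _ _).comp_left _)
end

section
/- A ring R is semisimple if and only if for every R-module M and every exact chain complex N of R-modules, whenever there exists an integer n such that N_{n+1} lies in the subprojectivity domain of M, the complex N lies in the subprojectivity domain of the sphere complex underline{M}[n]. -/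
/-!
Over a semisimple ring every module is projective. A chain map `f : M[n] ⟶ N` is a cycle
`M ⟶ N_n`; when `N` is exact it lifts, since `M` is projective, to `h : M ⟶ N_{n+1}`, and then
`f` factors through the disk `double (𝟙 M)` (`M` in degrees `n+1` and `n`). That disk corepresents
evaluation in degree `n+1`, so it is projective.

Conversely, write a module `X` as a quotient of a projective `P` and view
`0 ⟶ K ⟶ P ⟶ X ⟶ 0` as an exact complex `N` in degrees `2, 1, 0`. Its degree `1` term is
projective, so the hypothesis makes `X[0] ⟶ N` (the identity in degree `0`) factor through a
projective complex `Q`, and `X` is a retract of the projective module `Q_0`. Hence every module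
is projective, so every quotient `R ⧸ I` splits off and `R` is semisimple.
-/

open CategoryTheory CategoryTheory.Limits

universe u

namespace CategoryTheory

theorem Projective.of_corepresentableBy {C D : Type*} [Category C] [Category D] {F : C ⥤ D}
    [F.PreservesEpimorphisms] {X : D} [Projective X] {Y : C}
    (e : (F ⋙ coyoneda.obj (Opposite.op X)).CorepresentableBy Y) : Projective Y where
  factors f p _ := ⟨e.homEquiv.symm (Projective.factorThru (e.homEquiv f) (F.map p)), by
    rw [e.homEquiv_symm_comp]
    simp⟩

namespace ShortComplex

section

variable {C : Type*} [Category C] [HasZeroMorphisms C] [HasZeroObject C] (S : ShortComplex C)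

open ZeroObject in
/-- `S` as a chain complex, with `S.X₁`, `S.X₂`, `S.X₃` in degrees `2`, `1`, `0`. -/
noncomputable def toChainComplex : ChainComplex C ℤ where
  X
    | 0 => S.X₃
    | 1 => S.X₂
    | 2 => S.X₁
    | _ => 0
  d i j :=
    if h : i = 2 ∧ j = 1 then eqToHom (by rw [h.1]; rfl) ≫ S.f ≫ eqToHom (by rw [h.2]; rfl)
    else if h : i = 1 ∧ j = 0 then eqToHom (by rw [h.1]; rfl) ≫ S.g ≫ eqToHom (by rw [h.2]; rfl)
    else 0
  shape i j hij := by
    simp only [ComplexShape.down_Rel] at hij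
    rw [dif_neg (by omega), dif_neg (by omega)]
  d_comp_d' i j k hij hjk := by
    simp only [ComplexShape.down_Rel] at hij hjk
    subst hij hjk
    obtain rfl | rfl | hk := (by omega : k = 0 ∨ k = 1 ∨ (k ≠ 0 ∧ k ≠ 1))
    · simp
    · rw [dif_neg (by omega), dif_neg (by omega), zero_comp]
    · simp [hk.1, hk.2]

lemma isZero_toChainComplex_X {i : ℤ} (h₀ : i ≠ 0) (h₁ : i ≠ 1) (h₂ : i ≠ 2) :
    IsZero (S.toChainComplex.X i) := by
  dsimp only [toChainComplex]
  split
  all_goals first | omega | exact isZero_zero C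

lemma toChainComplex_d_eq_zero (i j : ℤ) (h₂ : i ≠ 2) (h₁ : i ≠ 1) :
    S.toChainComplex.d i j = 0 := by
  dsimp only [toChainComplex]
  rw [dif_neg (by omega), dif_neg (by omega)]
  rfl

@[simp]
lemma toChainComplex_d_two_one : S.toChainComplex.d 2 1 = S.f := by
  simp [toChainComplex]

@[simp]
lemma toChainComplex_d_one_zero : S.toChainComplex.d 1 0 = S.g := by
  simp [toChainComplex]

end

variable {C : Type*} [Category C] [Preadditive C] [HasZeroObject C] {S : ShortComplex C}

lemma ShortExact.exactAt_toChainComplex (hS : S.ShortExact) (i : ℤ) :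
    S.toChainComplex.ExactAt i := by
  obtain rfl | rfl | rfl | ⟨h₀, h₁, h₂⟩ :=
    (by omega : i = 0 ∨ i = 1 ∨ i = 2 ∨ (i ≠ 0 ∧ i ≠ 1 ∧ i ≠ 2))
  · rw [HomologicalComplex.exactAt_iff' _ 1 0 (-1) (by simp) (by simp),
      exact_iff_epi _ (S.toChainComplex_d_eq_zero 0 (-1) (by omega) (by omega)),
      HomologicalComplex.shortComplexFunctor'_obj_f, toChainComplex_d_one_zero]
    exact hS.epi_g
  · rw [HomologicalComplex.exactAt_iff' _ 2 1 0 (by simp) (by simp)]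
    refine (exact_iff_of_iso (S₁ := S) (S₂ := S.toChainComplex.sc' 2 1 0)
      (isoMk (Iso.refl _) (Iso.refl _) (Iso.refl _) ?_ ?_)).1 hS.exact
    · exact (Category.id_comp _).trans (S.toChainComplex_d_two_one.trans (Category.comp_id _).symm)
    · exact (Category.id_comp _).trans (S.toChainComplex_d_one_zero.trans (Category.comp_id _).symm)
  · rw [HomologicalComplex.exactAt_iff' _ 3 2 1 (by simp) (by simp),
      exact_iff_mono _ (S.toChainComplex_d_eq_zero 3 2 (by omega) (by omega)),
      HomologicalComplex.shortComplexFunctor'_obj_g, toChainComplex_d_two_one]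
    exact hS.mono_f
  · exact .of_isZero (S.isZero_toChainComplex_X h₀ h₁ h₂)

end ShortComplex

end CategoryTheory

namespace HomologicalComplex

section

variable {C : Type*} [Category C] [HasZeroMorphisms C] [HasZeroObject C] {ι : Type*}
  {c : ComplexShape ι} {i₀ i₁ : ι}

section

variable {X₀ X₁ : C} {f : X₀ ⟶ X₁} {hi₀₁ : c.Rel i₀ i₁} (h : i₀ ≠ i₁)
  {K : HomologicalComplex C c} (φ₀ : K.X i₀ ⟶ X₀) (φ₁ : K.X i₁ ⟶ X₁)
  (comm : K.d i₀ i₁ ≫ φ₁ = φ₀ ≫ f) (hφ : ∀ k, c.Rel k i₀ → K.d k i₀ ≫ φ₀ = 0)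

open scoped Classical in
noncomputable def mkHomToDouble : K ⟶ double f hi₀₁ where
  f k :=
    if hk₀ : k = i₀ then
      eqToHom (by rw [hk₀]) ≫ φ₀ ≫ (doubleXIso₀ f hi₀₁).inv ≫ eqToHom (by rw [hk₀])
    else if hk₁ : k = i₁ then
      eqToHom (by rw [hk₁]) ≫ φ₁ ≫ (doubleXIso₁ f hi₀₁ h).inv ≫ eqToHom (by rw [hk₁])
    else 0
  comm' k₀ k₁ hk := by
    by_cases h₁ : k₁ = i₁
    · subst h₁
      obtain rfl := c.prev_eq hk hi₀₁
      simp [dif_neg h.symm, double_d f hi₀₁ h, reassoc_of% comm]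
    · by_cases h₀ : k₁ = i₀
      · subst h₀
        simp [double_d_eq_zero₁ f hi₀₁ _ _ h, reassoc_of% (hφ k₀ hk)]
      · exact (isZero_double_X f hi₀₁ k₁ h₀ h₁).eq_of_tgt _ _

@[simp]
lemma mkHomToDouble_f₀ :
    (mkHomToDouble h φ₀ φ₁ comm hφ).f i₀ = φ₀ ≫ (doubleXIso₀ f hi₀₁).inv := by
  simp [mkHomToDouble]

@[simp]
lemma mkHomToDouble_f₁ :
    (mkHomToDouble h φ₀ φ₁ comm hφ).f i₁ = φ₁ ≫ (doubleXIso₁ f hi₀₁ h).inv := by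
  simp [mkHomToDouble, dif_neg h.symm]

end

-- A map `Q ⟶ double (𝟙 X)` is a map `Q.X i₁ ⟶ X`, so lifting problems for `Q.X i₁` become
-- lifting problems for `Q`.
theorem projective_X (hi₀₁ : c.Rel i₀ i₁) (h : i₀ ≠ i₁) (Q : HomologicalComplex C c)
    [Projective Q] : Projective (Q.X i₁) where
  factors {E X} u e _ := by
    let p : Q ⟶ double (𝟙 X) hi₀₁ :=
      mkHomToDouble h (Q.d i₀ i₁ ≫ u) u (by simp) (by simp)
    let q : double (𝟙 E) hi₀₁ ⟶ double (𝟙 X) hi₀₁ :=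
      mkHomToDouble h ((doubleXIso₀ _ hi₀₁).hom ≫ e) ((doubleXIso₁ _ hi₀₁ h).hom ≫ e)
        (by simp [double_d _ hi₀₁ h]) (fun k _ => by simp [double_d_eq_zero₁ _ hi₀₁ k i₀ h])
    have : Epi q := epi_of_epi_f _ fun k => by
      by_cases h₀ : k = i₀
      · subst h₀; simp only [q, mkHomToDouble_f₀]; infer_instance
      by_cases h₁ : k = i₁
      · subst h₁; simp only [q, mkHomToDouble_f₁]; infer_instance
      exact (isZero_double_X _ hi₀₁ k h₀ h₁).epi _
    obtain ⟨l, hl⟩ := Projective.factors p q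
    refine ⟨l.f i₁ ≫ (doubleXIso₁ _ hi₀₁ h).hom, ?_⟩
    simpa [p, q] using congr(($hl).f i₁ ≫ (doubleXIso₁ _ hi₀₁ h).hom)

theorem projective_double_id [HasFiniteColimits C] (hi₀₁ : c.Rel i₀ i₁) (h : i₀ ≠ i₁) (X : C)
    [Projective X] : Projective (double (𝟙 X) hi₀₁) :=
  .of_corepresentableBy (evalCompCoyonedaCorepresentableByDoubleId hi₀₁ h X)

end

end HomologicalComplex

theorem subprojDomain_of_projective {A : Type*} [Category A] (M : A) {N : A} [Projective N] :
    SubprojDomain M N :=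
  fun f => ⟨N, inferInstance, f, 𝟙 N, Category.comp_id f⟩

section

open HomologicalComplex

variable {C : Type*} [Category C] {ι : Type*} [DecidableEq ι] {c : ComplexShape ι} {j i : ι}

theorem subprojDomain_single_of_exactAt [Abelian C] (hji : c.Rel j i) (hne : j ≠ i) (M : C)
    [Projective M] {N : HomologicalComplex C c} (hN : N.ExactAt i) :
    SubprojDomain ((single C c i).obj M) N := by
  intro f
  let g := (singleObjXSelf c i M).inv ≫ f.f i
  have hg (k : ι) : g ≫ N.d i k = 0 := by simp [g]
  have hex := (N.exactAt_iff' j i (c.next i) (c.prev_eq' hji) rfl).1 hN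
  obtain ⟨h, hh⟩ : ∃ h : M ⟶ N.X j, h ≫ N.d j i = g :=
    ⟨_, hex.liftFromProjective_comp g (hg _)⟩
  refine ⟨double (𝟙 M) hji, projective_double_id hji hne M,
    mkHomFromSingle (doubleXIso₁ _ hji hne).inv
      (fun k _ => by simp [double_d_eq_zero₀ _ hji i k hne.symm]),
    mkHomFromDouble hji hne h g (by simpa using hh) (fun k _ => hg k), ?_⟩
  ext
  rw [comp_f, mkHomFromSingle_f, Category.assoc, mkHomFromDouble_f₁]
  simp [g]

theorem projective_of_subprojDomain_single [HasZeroMorphisms C] [HasZeroObject C]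
    (hji : c.Rel j i) (hne : j ≠ i) {X : C} {K : HomologicalComplex C c}
    (hK : SubprojDomain ((single C c i).obj X) K) (φ : X ⟶ K.X i) [IsSplitMono φ]
    (hφ : ∀ k, c.Rel i k → φ ≫ K.d i k = 0) : Projective X := by
  obtain ⟨Q, _, a, b, hab⟩ := hK (mkHomFromSingle φ hφ)
  have := projective_X hji hne Q
  exact Retract.projective ⟨(singleObjXSelf c i X).inv ≫ a.f i, b.f i ≫ retraction φ, by
    rw [Category.assoc, ← Category.assoc (a.f i), ← comp_f, hab]
    simp⟩

end

theorem projective_of_forall_subprojDomain_single {C : Type*} [Category C] [Abelian C]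
    [EnoughProjectives C] (X : C)
    (h : ∀ N : ChainComplex C ℤ, (∀ i, N.ExactAt i) → SubprojDomain X (N.X 1) →
      SubprojDomain ((HomologicalComplex.single C (ComplexShape.down ℤ) 0).obj X) N) :
    Projective X := by
  let S := ShortComplex.kernelSequence (Projective.π X)
  have hS : S.ShortExact := .mk' (ShortComplex.kernelSequence_exact _) inferInstance
    (inferInstanceAs (Epi (Projective.π X)))
  have : Projective (S.toChainComplex.X 1) := inferInstanceAs (Projective (Projective.over X))
  have : IsSplitMono (Y := S.toChainComplex.X 0) (𝟙 X) := .mk' ⟨𝟙 X, Category.id_comp _⟩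
  refine projective_of_subprojDomain_single (j := 1) rfl (by omega)
    (h _ hS.exactAt_toChainComplex (subprojDomain_of_projective X)) (𝟙 X) (fun k _ => ?_)
  exact (Category.id_comp _).trans (S.toChainComplex_d_eq_zero 0 k (by omega) (by omega))

theorem isSemisimpleModule_of_projective_quotient {R M : Type*} [Ring R] [AddCommGroup M]
    [Module R M] (h : ∀ p : Submodule R M, Module.Projective R (M ⧸ p)) :
    IsSemisimpleModule R M where
  exists_isCompl p := by
    obtain ⟨s, hs⟩ := p.mkQ.exists_rightInverse_of_surjective p.range_mkQ
    have hT : IsIdempotentElem (s ∘ₗ p.mkQ) := by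
      rw [IsIdempotentElem, Module.End.mul_eq_comp, LinearMap.comp_assoc,
        ← LinearMap.comp_assoc p.mkQ, hs, LinearMap.id_comp]
    refine ⟨LinearMap.range s, ?_⟩
    have hsinj : LinearMap.ker s = ⊥ := LinearMap.ker_eq_bot_of_inverse hs
    simpa [LinearMap.range_comp_of_range_eq_top s p.range_mkQ,
      LinearMap.ker_comp_of_ker_eq_bot p.mkQ hsinj] using
      (LinearMap.IsIdempotentElem.isCompl hT).symm

/-- `R` is semisimple iff for every module `M` and every exact complex `N`,
whenever there is `n` with `N_{n+1}` in the subprojectivity domain of `M`, the complex `N`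
lies in the subprojectivity domain of the sphere complex `M` concentrated in degree `n`. -/
theorem isSemisimpleRing_iff_subprojDomain
    {R : Type u} [Ring R] :
    IsSemisimpleRing R ↔
      ∀ (M : ModuleCat.{u} R) (N : ChainComplex (ModuleCat.{u} R) ℤ),
        (∀ i : ℤ, N.ExactAt i) →
        ∀ n : ℤ, SubprojDomain M (N.X (n + 1)) →
          SubprojDomain
            ((HomologicalComplex.single (ModuleCat.{u} R) (ComplexShape.down ℤ) n).obj M)
            N := by
  constructor
  · intro _ M N hN n _
    have := Module.projective_of_isSemisimpleRing R M
    exact subprojDomain_single_of_exactAt (j := n + 1) rfl (by omega) M (hN n)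
  · intro h
    have (X : ModuleCat.{u} R) : Projective X :=
      projective_of_forall_subprojDomain_single X fun N hN => h X N hN 0
    exact isSemisimpleModule_of_projective_quotient fun p =>
      ModuleCat.projective_of_module_projective (ModuleCat.of R (R ⧸ p))
end
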